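/- arXiv:1711.03209 — 6 statements merged into one kernel-verified Lean document; each statement's English description precedes it below -/
import Mathlib

section
/- Let v=(v₁,v₂)∈ℤ² and let A=(a,b;c,d) be a matrix in SL(2,ℤ). Define φ_A:(ℂ*)²→(ℂ*)² by φ_A(x,y)=(xᵃyᵇ, xᶜyᵈ), and set Av=(av₁+bv₂, cv₁+dv₂). Then for every (x,y)∈(ℂ*)² with 1+x^{v₂}y^{−v₁}≠0, writing (X,Y)=φ_A(x,y), one has 1+X^{(Av)₂}Y^{−(Av)₁}=1+x^{v₂}y^{−v₁}≠0, and φ_A(μ_v(x,y))=μ_{Av}(φ_A(x,y)). That is, the wall-crossing maps are equivariant for the multiplicative SL(2,ℤ)-action on (ℂ*)². -/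
/-- The wall-crossing map `μ_v : (ℂ*)² ⇢ (ℂ*)²` associated to `v ∈ ℤ²`. -/
noncomputable def muMap (v : ℤ × ℤ) (x y : ℂ) : ℂ × ℂ :=
  (x * (1 + x ^ v.2 * y ^ (-v.1)) ^ (-v.1),
   y * (1 + x ^ v.2 * y ^ (-v.1)) ^ (-v.2))

/-- The monomial action of a matrix `(a,b;c,d)` on `(ℂ*)²`. -/
noncomputable def phiA (a b c d : ℤ) (x y : ℂ) : ℂ × ℂ :=
  (x ^ a * y ^ b, x ^ c * y ^ d)

/-- Wall-crossing maps are equivariant for the multiplicative `SL(2,ℤ)`-action on `(ℂ*)²`. -/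
theorem wall_crossing_SL2_equivariant
    (v : ℤ × ℤ) (a b c d : ℤ) (hA : a * d - b * c = 1)
    (x y : ℂ) (hx : x ≠ 0) (hy : y ≠ 0)
    (h : 1 + x ^ v.2 * y ^ (-v.1) ≠ 0) :
    (1 + (x ^ a * y ^ b) ^ (c * v.1 + d * v.2) * (x ^ c * y ^ d) ^ (-(a * v.1 + b * v.2))
        = 1 + x ^ v.2 * y ^ (-v.1)) ∧
    (1 + (x ^ a * y ^ b) ^ (c * v.1 + d * v.2) * (x ^ c * y ^ d) ^ (-(a * v.1 + b * v.2)) ≠ 0) ∧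
    phiA a b c d (muMap v x y).1 (muMap v x y).2
      = muMap (a * v.1 + b * v.2, c * v.1 + d * v.2) (x ^ a * y ^ b) (x ^ c * y ^ d) := by
  have key : (x ^ a * y ^ b) ^ (c * v.1 + d * v.2) * (x ^ c * y ^ d) ^ (-(a * v.1 + b * v.2))
      = x ^ v.2 * y ^ (-v.1) := by
    rw [mul_zpow, mul_zpow, ← zpow_mul, ← zpow_mul, ← zpow_mul, ← zpow_mul]
    rw [show x ^ (a * (c * v.1 + d * v.2)) * y ^ (b * (c * v.1 + d * v.2)) *
        (x ^ (c * -(a * v.1 + b * v.2)) * y ^ (d * -(a * v.1 + b * v.2)))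
        = x ^ (a * (c * v.1 + d * v.2)) * x ^ (c * -(a * v.1 + b * v.2)) *
          (y ^ (b * (c * v.1 + d * v.2)) * y ^ (d * -(a * v.1 + b * v.2))) by ring]
    rw [← zpow_add₀ hx, ← zpow_add₀ hy]
    congr 1
    · congr 1; linear_combination v.2 * hA
    · congr 1; linear_combination -v.1 * hA
  have h1 : 1 + (x ^ a * y ^ b) ^ (c * v.1 + d * v.2) * (x ^ c * y ^ d) ^ (-(a * v.1 + b * v.2))
      = 1 + x ^ v.2 * y ^ (-v.1) := by rw [key]
  set u := 1 + x ^ v.2 * y ^ (-v.1) with hu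
  refine ⟨h1, h1 ▸ h, ?_⟩
  simp only [muMap, phiA, h1, key]
  have : ∀ p q : ℤ, (x * u ^ (-v.1)) ^ p * (y * u ^ (-v.2)) ^ q
      = x ^ p * y ^ q * u ^ (-(p * v.1 + q * v.2)) := by
    intro p q
    rw [mul_zpow, mul_zpow, ← zpow_mul, ← zpow_mul]
    rw [show x ^ p * u ^ (-v.1 * p) * (y ^ q * u ^ (-v.2 * q))
        = x ^ p * y ^ q * (u ^ (-v.1 * p) * u ^ (-v.2 * q)) by ring, ← zpow_add₀ h]
    ring_nf
  rw [Prod.mk.injEq]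
  constructor
  · rw [this a b]
  · rw [this c d]
end

section
/- Let v=(v₁,v₂)∈ℤ². For every (x,y)∈(ℂ*)² with 1+x^{v₂}y^{−v₁}≠0, the point μ_v(x,y) lies in the domain of μ_{−v} (indeed 1+X^{−v₂}Y^{v₁}=x^{−v₂}y^{v₁}(1+x^{v₂}y^{−v₁})≠0 at (X,Y)=μ_v(x,y)), and the composition satisfies μ_{−v}(μ_v(x,y)) = (x^{1−v₁v₂}·y^{v₁²}, x^{−v₂²}·y^{1+v₁v₂}). In particular, the twice-repeated mutation acts on (ℂ*)² as the monomial automorphism given by the matrix B=(1−v₁v₂, v₁²; −v₂², 1+v₁v₂)∈SL(2,ℤ). -/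
/-!
Write `m = x^{v₂} y^{-v₁}` and `u = 1 + m`, so that `μ_v(x, y) = (x u^{-v₁}, y u^{-v₂})`.
The monomial `m` is invariant under `μ_v`, since the powers of `u` cancel in `m ∘ μ_v`.
Hence `μ_{-v}` multiplies the coordinates of `μ_v(x, y)` by powers of `1 + m⁻¹ = m⁻¹ u`,
whose powers of `u` cancel the ones `μ_v` introduced:
`μ_{-v}(μ_v(x, y)) = (x m^{-v₁}, y m^{-v₂})`, a monomial map.
-/

lemma one_add_inv_eq_inv_mul_one_add {K : Type*} [DivisionRing K] {m : K} (hm : m ≠ 0) :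
    1 + m⁻¹ = m⁻¹ * (1 + m) := by
  rw [mul_one_add, inv_mul_cancel₀ hm, add_comm]

section CommGroupWithZero

variable {G : Type*} [CommGroupWithZero G] {x y : G}

lemma zpow_neg_mul_inv_mul_zpow {u : G} (hu : u ≠ 0) (m : G) (k : ℤ) :
    u ^ (-k) * (m⁻¹ * u) ^ k = m ^ (-k) := by
  rw [mul_zpow, inv_zpow', mul_left_comm, ← zpow_add₀ hu, neg_add_cancel, zpow_zero, mul_one]

lemma zpow_neg_mul_zpow_eq_inv (a b : ℤ) : x ^ (-b) * y ^ a = (x ^ b * y ^ (-a))⁻¹ := by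
  rw [mul_inv, zpow_neg, zpow_neg, inv_inv]

lemma mul_zpow_monomial_left (hx : x ≠ 0) (b c k : ℤ) :
    x * (x ^ b * y ^ c) ^ k = x ^ (1 + b * k) * y ^ (c * k) := by
  rw [mul_zpow, ← zpow_mul, ← zpow_mul, zpow_add₀ hx, zpow_one, mul_assoc]

lemma mul_zpow_monomial_right (hy : y ≠ 0) (b c k : ℤ) :
    y * (x ^ b * y ^ c) ^ k = x ^ (b * k) * y ^ (1 + c * k) := by
  rw [mul_comm (x ^ b), mul_comm (x ^ (b * k)), mul_zpow_monomial_left hy]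

end CommGroupWithZero

section muMap

variable {v : ℤ × ℤ} {x y : ℂ}

theorem muMap_fst_zpow_neg_mul_snd_zpow (h : 1 + x ^ v.2 * y ^ (-v.1) ≠ 0) :
    (muMap v x y).1 ^ (-v.2) * (muMap v x y).2 ^ v.1 = x ^ (-v.2) * y ^ v.1 := by
  obtain ⟨a, b⟩ := v
  set u := 1 + x ^ b * y ^ (-a)
  calc (x * u ^ (-a)) ^ (-b) * (y * u ^ (-b)) ^ a
      = x ^ (-b) * y ^ a * (u ^ (a * b) * u ^ (-(a * b))) := by
        rw [mul_zpow, mul_zpow, ← zpow_mul, ← zpow_mul, neg_mul_neg, neg_mul, mul_comm b a]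
        ring
    _ = x ^ (-b) * y ^ a := by rw [← zpow_add₀ h, add_neg_cancel, zpow_zero, mul_one]

theorem one_add_muMap_fst_zpow_neg_mul_snd_zpow (hx : x ≠ 0) (hy : y ≠ 0)
    (h : 1 + x ^ v.2 * y ^ (-v.1) ≠ 0) :
    1 + (muMap v x y).1 ^ (-v.2) * (muMap v x y).2 ^ v.1
      = x ^ (-v.2) * y ^ v.1 * (1 + x ^ v.2 * y ^ (-v.1)) := by
  have hm : x ^ v.2 * y ^ (-v.1) ≠ 0 := mul_ne_zero (zpow_ne_zero _ hx) (zpow_ne_zero _ hy)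
  rw [muMap_fst_zpow_neg_mul_snd_zpow h, zpow_neg_mul_zpow_eq_inv,
    one_add_inv_eq_inv_mul_one_add hm]

theorem muMap_neg_muMap (hx : x ≠ 0) (hy : y ≠ 0) (h : 1 + x ^ v.2 * y ^ (-v.1) ≠ 0) :
    muMap (-v) (muMap v x y).1 (muMap v x y).2
      = (x * (x ^ v.2 * y ^ (-v.1)) ^ (-v.1), y * (x ^ v.2 * y ^ (-v.1)) ^ (-v.2)) := by
  have hdom : 1 + (muMap v x y).1 ^ (-v.2) * (muMap v x y).2 ^ v.1
      = (x ^ v.2 * y ^ (-v.1))⁻¹ * (1 + x ^ v.2 * y ^ (-v.1)) := by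
    rw [one_add_muMap_fst_zpow_neg_mul_snd_zpow hx hy h, zpow_neg_mul_zpow_eq_inv]
  obtain ⟨a, b⟩ := v
  simp only [muMap, Prod.fst_neg, Prod.snd_neg, neg_neg] at hdom h ⊢
  rw [hdom, mul_assoc, mul_assoc, zpow_neg_mul_inv_mul_zpow h, zpow_neg_mul_inv_mul_zpow h]

end muMap

/-- The point `μ_v(x,y)` lies in the domain of `μ_{-v}`, and the composition
`μ_{-v} ∘ μ_v` is the monomial automorphism given by the matrix
`(1 - v₁v₂, v₁²; -v₂², 1 + v₁v₂) ∈ SL(2,ℤ)`. -/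
theorem mu_neg_comp_mu (v : ℤ × ℤ) (x y : ℂ) (hx : x ≠ 0) (hy : y ≠ 0)
    (h : 1 + x ^ v.2 * y ^ (-v.1) ≠ 0) :
    (1 + (muMap v x y).1 ^ (-v.2) * (muMap v x y).2 ^ v.1
        = x ^ (-v.2) * y ^ v.1 * (1 + x ^ v.2 * y ^ (-v.1))) ∧
    (1 + (muMap v x y).1 ^ (-v.2) * (muMap v x y).2 ^ v.1 ≠ 0) ∧
    muMap (-v) (muMap v x y).1 (muMap v x y).2
      = (x ^ (1 - v.1 * v.2) * y ^ (v.1 ^ 2), x ^ (-v.2 ^ 2) * y ^ (1 + v.1 * v.2)) := by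
  have hdom := one_add_muMap_fst_zpow_neg_mul_snd_zpow hx hy h
  refine ⟨hdom, ?_, ?_⟩
  · rw [hdom]
    exact mul_ne_zero (mul_ne_zero (zpow_ne_zero _ hx) (zpow_ne_zero _ hy)) h
  · rw [muMap_neg_muMap hx hy h, mul_zpow_monomial_left hx, mul_zpow_monomial_right hy]
    congr 3 <;> ring
end

section
/- Let W₀(x,y)=x+y+(xy)^{−1}. Then for each v in {(1,1),(−2,1),(1,−2)} the mutation μ_vW₀ is a Laurent polynomial; explicitly, on the respective domains: W₀(μ_{(1,1)}(x,y)) = y + (x+y)²/(xy³), W₀(μ_{(−2,1)}(x,y)) = x(1+xy²)² + (xy)^{−1}, and W₀(μ_{(1,−2)}(x,y)) = x + y(1+x^{−2}y^{−1})². In particular (W₀,{(1,1),(−2,1),(1,−2)}) is an LG seed (the LG seed of ℂP²). -/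
/-- Evaluation of a Laurent polynomial in two variables at a point `(x, y)`. -/
noncomputable def lEval (P : (ℤ × ℤ) →₀ ℂ) (x y : ℂ) : ℂ :=
  P.sum fun m c => c * x ^ m.1 * y ^ m.2

/-- The mutation of the function `W` along `v` agrees with a Laurent polynomial
on the domain of `μ_v`. -/
def funMutLaurent (W : ℂ → ℂ → ℂ) (v : ℤ × ℤ) : Prop :=
  ∃ P : (ℤ × ℤ) →₀ ℂ, ∀ x y : ℂ, x ≠ 0 → y ≠ 0 →
    1 + x ^ v.2 * y ^ (-v.1) ≠ 0 →
    W (muMap v x y).1 (muMap v x y).2 = lEval P x y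

/-- The toric potential of `ℂP²`. -/
noncomputable def W0 (x y : ℂ) : ℂ := x + y + (x * y)⁻¹

/-! Write `t = 1 + x^{v₂} y^{-v₁}` for the wall factor. In `W₀ ∘ μ_v` the terms with `t` in the
denominator always add up to a multiple of `t`: for `v = (1,1)`, `t = (x + y)/y` and
`x/t + y/t = y`; for `v = (-2,1)`, `y/t + 1/(xyt) = 1/(xy)`; for `v = (1,-2)`,
`x/t + 1/(xyt) = x`. Clearing denominators therefore leaves a Laurent polynomial. -/

lemma lEval_add (P Q : (ℤ × ℤ) →₀ ℂ) (x y : ℂ) :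
    lEval (P + Q) x y = lEval P x y + lEval Q x y :=
  Finsupp.sum_add_index' (fun _ => by simp) (fun _ _ _ => by ring)

lemma lEval_single (m : ℤ × ℤ) (c : ℂ) (x y : ℂ) :
    lEval (Finsupp.single m c) x y = c * x ^ m.1 * y ^ m.2 :=
  Finsupp.sum_single_index (by simp)

lemma funMutLaurent_of_eq_lEval {W f : ℂ → ℂ → ℂ} {v : ℤ × ℤ} (P : (ℤ × ℤ) →₀ ℂ)
    (hW : ∀ x y : ℂ, x ≠ 0 → y ≠ 0 → 1 + x ^ v.2 * y ^ (-v.1) ≠ 0 →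
      W (muMap v x y).1 (muMap v x y).2 = f x y)
    (hP : ∀ x y : ℂ, x ≠ 0 → y ≠ 0 → f x y = lEval P x y) :
    funMutLaurent W v :=
  ⟨P, fun x y hx hy h => (hW x y hx hy h).trans (hP x y hx hy)⟩

section Mutations

variable (x y : ℂ)

lemma W0_muMap_one_one (hx : x ≠ 0) (hy : y ≠ 0) (h : 1 + x ^ (1 : ℤ) * y ^ (-1 : ℤ) ≠ 0) :
    W0 (muMap (1, 1) x y).1 (muMap (1, 1) x y).2 = y + (x + y) ^ 2 / (x * y ^ 3) := by
  have hwall : 1 + x ^ (1 : ℤ) * y ^ (-1 : ℤ) = (x + y) / y := by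
    rw [zpow_one, zpow_neg_one]; field_simp; ring
  have hxy : x + y ≠ 0 := by
    rw [hwall] at h
    exact left_ne_zero_of_mul h
  simp only [muMap, W0, hwall]
  norm_num
  field_simp

lemma W0_muMap_neg_two_one (hx : x ≠ 0) (hy : y ≠ 0) (h : 1 + x ^ (1 : ℤ) * y ^ (2 : ℤ) ≠ 0) :
    W0 (muMap (-2, 1) x y).1 (muMap (-2, 1) x y).2 = x * (1 + x * y ^ 2) ^ 2 + (x * y)⁻¹ := by
  norm_num [muMap, W0] at h ⊢
  field_simp
  ring

lemma W0_muMap_one_neg_two (hx : x ≠ 0) (hy : y ≠ 0)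
    (h : 1 + x ^ (-2 : ℤ) * y ^ (-1 : ℤ) ≠ 0) :
    W0 (muMap (1, -2) x y).1 (muMap (1, -2) x y).2
      = x + y * (1 + x ^ (-2 : ℤ) * y ^ (-1 : ℤ)) ^ 2 := by
  have hwall : 1 + x ^ (-2 : ℤ) * y ^ (-1 : ℤ) = (x ^ 2 * y + 1) / (x ^ 2 * y) := by
    rw [zpow_neg, zpow_neg_one, zpow_ofNat]; field_simp
  have hq : x ^ 2 * y + 1 ≠ 0 := by
    rw [hwall] at h
    exact left_ne_zero_of_mul h
  simp only [muMap, W0, neg_neg, hwall]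
  norm_num
  field_simp
  ring

lemma W0_mutation_one_one_eq_lEval (hx : x ≠ 0) (hy : y ≠ 0) :
    y + (x + y) ^ 2 / (x * y ^ 3) = lEval (Finsupp.single (0, 1) 1 + Finsupp.single (1, -3) 1
      + Finsupp.single (0, -2) 2 + Finsupp.single (-1, -1) 1) x y := by
  simp only [lEval_add, lEval_single]
  norm_num
  field_simp
  ring

lemma W0_mutation_neg_two_one_eq_lEval (hx : x ≠ 0) (hy : y ≠ 0) :
    x * (1 + x * y ^ 2) ^ 2 + (x * y)⁻¹ = lEval (Finsupp.single (1, 0) 1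
      + Finsupp.single (2, 2) 2 + Finsupp.single (3, 4) 1 + Finsupp.single (-1, -1) 1) x y := by
  simp only [lEval_add, lEval_single]
  norm_num
  field_simp
  ring

lemma W0_mutation_one_neg_two_eq_lEval (hx : x ≠ 0) (hy : y ≠ 0) :
    x + y * (1 + x ^ (-2 : ℤ) * y ^ (-1 : ℤ)) ^ 2 = lEval (Finsupp.single (1, 0) 1
      + Finsupp.single (0, 1) 1 + Finsupp.single (-2, 0) 2 + Finsupp.single (-4, -1) 1) x y := by
  simp only [lEval_add, lEval_single]
  norm_num
  field_simp
  ring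

end Mutations

/-- `(x + y + (xy)⁻¹, {(1,1), (-2,1), (1,-2)})` is an LG seed (the LG seed of `ℂP²`):
each of the three mutations of `W₀ = x + y + (xy)⁻¹` is a Laurent polynomial,
with the explicit formulas given on the respective domains. -/
theorem cp2_LG_seed :
    (∀ x y : ℂ, x ≠ 0 → y ≠ 0 → 1 + x ^ (1 : ℤ) * y ^ (-1 : ℤ) ≠ 0 →
      W0 (muMap (1, 1) x y).1 (muMap (1, 1) x y).2
        = y + (x + y) ^ 2 / (x * y ^ 3)) ∧
    (∀ x y : ℂ, x ≠ 0 → y ≠ 0 → 1 + x ^ (1 : ℤ) * y ^ (2 : ℤ) ≠ 0 →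
      W0 (muMap (-2, 1) x y).1 (muMap (-2, 1) x y).2
        = x * (1 + x * y ^ 2) ^ 2 + (x * y)⁻¹) ∧
    (∀ x y : ℂ, x ≠ 0 → y ≠ 0 → 1 + x ^ (-2 : ℤ) * y ^ (-1 : ℤ) ≠ 0 →
      W0 (muMap (1, -2) x y).1 (muMap (1, -2) x y).2
        = x + y * (1 + x ^ (-2 : ℤ) * y ^ (-1 : ℤ)) ^ 2) ∧
    funMutLaurent W0 (1, 1) ∧ funMutLaurent W0 (-2, 1) ∧ funMutLaurent W0 (1, -2) :=
  ⟨W0_muMap_one_one, W0_muMap_neg_two_one, W0_muMap_one_neg_two,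
    funMutLaurent_of_eq_lEval _ W0_muMap_one_one W0_mutation_one_one_eq_lEval,
    funMutLaurent_of_eq_lEval _ W0_muMap_neg_two_one W0_mutation_neg_two_one_eq_lEval,
    funMutLaurent_of_eq_lEval _ W0_muMap_one_neg_two W0_mutation_one_neg_two_eq_lEval⟩
end

section
/- Let W:(ℂ*)²→ℂ be given by W(x,y)=(1+x+y)³/(xy) − 6 (the disk potential of a monotone Lagrangian torus in the cubic surface Bl₆ℂP²). Then (1,1) is a nondegenerate (Morse) critical point of W with critical value 21: one has W(1,1)=21, ∂W/∂x(1,1)=∂W/∂y(1,1)=0, and the Hessian matrix of second partial derivatives of W at (1,1) equals (18,−9;−9,18), whose determinant 243 is nonzero. -/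
/-- The disk potential of a monotone Lagrangian torus in the cubic surface `Bl₆ℂP²`. -/
noncomputable def Wcubic (x y : ℂ) : ℂ := (1 + x + y) ^ 3 / (x * y) - 6

/-! `W` is symmetric in `x` and `y`, so everything follows from the first partial
`∂ₓW = (1+x+y)²(2x-1-y)/(x²y)`, which vanishes at `(1,1)`; along each line through `(1,1)` it is
a product with the factor `2x-1-y` vanishing there, so its derivative is read off from that
factor alone. -/

open Topology

theorem Wcubic_comm (x y : ℂ) : Wcubic x y = Wcubic y x := by
  unfold Wcubic; ring

theorem hasDerivAt_Wcubic_fst {x y : ℂ} (hx : x ≠ 0) (hy : y ≠ 0) :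
    HasDerivAt (fun x' => Wcubic x' y) ((1 + x + y) ^ 2 * (2 * x - 1 - y) / (x ^ 2 * y)) x := by
  have hnum := (((hasDerivAt_id x).const_add 1).add_const y).pow 3
  have hden := (hasDerivAt_id x).mul_const y
  refine ((hnum.div hden (mul_ne_zero hx hy)).sub_const 6).congr_deriv ?_
  simp only [id, Pi.pow_apply]
  field_simp
  ring

theorem deriv_Wcubic_fst {x y : ℂ} (hx : x ≠ 0) (hy : y ≠ 0) :
    deriv (fun x' => Wcubic x' y) x = (1 + x + y) ^ 2 * (2 * x - 1 - y) / (x ^ 2 * y) :=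
  (hasDerivAt_Wcubic_fst hx hy).deriv

theorem deriv_Wcubic_snd {x y : ℂ} (hx : x ≠ 0) (hy : y ≠ 0) :
    deriv (fun y' => Wcubic x y') y = (1 + y + x) ^ 2 * (2 * y - 1 - x) / (y ^ 2 * x) := by
  simp only [Wcubic_comm x]
  exact deriv_Wcubic_fst hy hx

theorem deriv_deriv_Wcubic_fst_fst :
    deriv (fun x => deriv (fun x' => Wcubic x' 1) x) 1 = 18 := by
  have hW : (fun x => deriv (fun x' => Wcubic x' 1) x)
      =ᶠ[𝓝 1] fun x => (2 + x) ^ 2 * (2 * x - 2) / x ^ 2 :=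
    (eventually_ne_nhds one_ne_zero).mono fun x hx =>
      (deriv_Wcubic_fst hx one_ne_zero).trans (by ring)
  have hsq := ((hasDerivAt_id (1 : ℂ)).const_add 2).pow 2
  have hlin := ((hasDerivAt_id (1 : ℂ)).const_mul 2).sub_const 2
  have hden := (hasDerivAt_id (1 : ℂ)).pow 2
  rw [hW.deriv_eq]
  exact ((hsq.mul hlin).div hden (by norm_num)).deriv.trans (by norm_num)

theorem deriv_deriv_Wcubic_snd_fst :
    deriv (fun y => deriv (fun x => Wcubic x y) 1) 1 = -9 := by
  have hW : (fun y => deriv (fun x => Wcubic x y) 1)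
      =ᶠ[𝓝 1] fun y => (2 + y) ^ 2 * (1 - y) / y :=
    (eventually_ne_nhds one_ne_zero).mono fun y hy =>
      (deriv_Wcubic_fst one_ne_zero hy).trans (by ring)
  have hsq := ((hasDerivAt_id (1 : ℂ)).const_add 2).pow 2
  have hlin := (hasDerivAt_id (1 : ℂ)).const_sub 1
  rw [hW.deriv_eq]
  exact ((hsq.mul hlin).div (hasDerivAt_id 1) one_ne_zero).deriv.trans (by norm_num)

theorem deriv_deriv_Wcubic_snd_snd :
    deriv (fun y => deriv (fun y' => Wcubic 1 y') y) 1 = 18 := by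
  simp only [Wcubic_comm 1]
  exact deriv_deriv_Wcubic_fst_fst

theorem deriv_deriv_Wcubic_fst_snd :
    deriv (fun x => deriv (fun y => Wcubic x y) 1) 1 = -9 := by
  have hswap : (fun x => deriv (fun y => Wcubic x y) 1) = fun x => deriv (fun y => Wcubic y x) 1 :=
    funext fun x => by simp only [Wcubic_comm x]
  rw [hswap]
  exact deriv_deriv_Wcubic_snd_fst

/-- `(1,1)` is a nondegenerate (Morse) critical point of `W = (1+x+y)³/(xy) - 6` with
critical value `21`: the first complex partial derivatives at `(1,1)` vanish, and the
Hessian matrix of second partial derivatives there is `(18, -9; -9, 18)`, of nonzero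
determinant `243`. -/
theorem cubic_surface_morse_critical_point :
    Wcubic 1 1 = 21 ∧
    deriv (fun x => Wcubic x 1) 1 = 0 ∧
    deriv (fun y => Wcubic 1 y) 1 = 0 ∧
    (!![deriv (fun x => deriv (fun x' => Wcubic x' 1) x) 1,
        deriv (fun x => deriv (fun y => Wcubic x y) 1) 1;
        deriv (fun y => deriv (fun x => Wcubic x y) 1) 1,
        deriv (fun y => deriv (fun y' => Wcubic 1 y') y) 1]
      = !![(18 : ℂ), -9; -9, 18]) ∧
    (!![(18 : ℂ), -9; -9, 18]).det = 243 ∧ (243 : ℂ) ≠ 0 := by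
  refine ⟨by norm_num [Wcubic], ?_, ?_, ?_, ?_, by norm_num⟩
  · rw [deriv_Wcubic_fst one_ne_zero one_ne_zero]; norm_num
  · rw [deriv_Wcubic_snd one_ne_zero one_ne_zero]; norm_num
  · rw [deriv_deriv_Wcubic_fst_fst, deriv_deriv_Wcubic_fst_snd, deriv_deriv_Wcubic_snd_fst,
      deriv_deriv_Wcubic_snd_snd]
  · rw [Matrix.det_fin_two_of]; norm_num
end

section
/- Let n≥1 and 1≤k≤n. For x=(x₁,…,x_n)∈(ℂ*)ⁿ set S=x₁^{−1}+…+x_k^{−1}, and assume S≠0. Define x'_i = x_i·x_k·S for 1≤i≤k and x'_i = x_i for k<i≤n (the higher-dimensional wall-crossing substitution). Then Σ_{i=1}^n (x'_i)^{−1} + Π_{i=1}^n x'_i = Σ_{i=k}^n x_i^{−1} + (x_k)^k·S^k·Π_{i=1}^n x_i. That is, under the wall-crossing map the toric potential Σ_{i=1}^n x_i^{−1} + x₁⋯x_n of ℂPⁿ transforms into the Laurent polynomial Σ_{i=k}^n x_i^{−1} + (x_k)^k·(Σ_{i=1}^k x_i^{−1})^k·Π_{i=1}^n x_i, the disk potential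 of the mutated monotone torus in ℂPⁿ. -/
open Finset

/-- Under the higher-dimensional wall-crossing substitution
`xᵢ ↦ xᵢ·x_k·(x₁⁻¹ + … + x_k⁻¹)` for `i ≤ k`, `xᵢ ↦ xᵢ` for `i > k`,
the toric potential `Σ xᵢ⁻¹ + x₁⋯x_n` of `ℂPⁿ` transforms into
`Σ_{i=k}^n xᵢ⁻¹ + x_k^k·(Σ_{i=1}^k xᵢ⁻¹)^k·Π xᵢ`, the disk potential of the mutated
monotone torus in `ℂPⁿ`. -/
theorem cpn_mutated_potential (n k : ℕ) (hk1 : 1 ≤ k) (hkn : k ≤ n)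
    (x : ℕ → ℂ) (hx : ∀ i ∈ Finset.Icc 1 n, x i ≠ 0)
    (hS : (∑ i ∈ Finset.Icc 1 k, (x i)⁻¹) ≠ 0) :
    (∑ i ∈ Finset.Icc 1 n,
        (if i ≤ k then x i * x k * ∑ j ∈ Finset.Icc 1 k, (x j)⁻¹ else x i)⁻¹)
      + ∏ i ∈ Finset.Icc 1 n,
          (if i ≤ k then x i * x k * ∑ j ∈ Finset.Icc 1 k, (x j)⁻¹ else x i)
    = (∑ i ∈ Finset.Icc k n, (x i)⁻¹)
      + (x k) ^ k * (∑ j ∈ Finset.Icc 1 k, (x j)⁻¹) ^ k * ∏ i ∈ Finset.Icc 1 n, x i := by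
  set S : ℂ := ∑ j ∈ Finset.Icc 1 k, (x j)⁻¹ with hSdef
  have hxk : x k ≠ 0 := hx k (by simp [hk1, hkn])
  have he : ∀ m, Finset.Icc 1 m = Finset.Ioc 0 m := by
    intro m; ext i; simp [Nat.lt_iff_add_one_le]
  -- split the range
  have hsplit : ∀ (f : ℕ → ℂ),
      ∑ i ∈ Finset.Icc 1 n, f i = (∑ i ∈ Finset.Icc 1 k, f i) + ∑ i ∈ Finset.Ioc k n, f i := by
    intro f
    rw [he n, he k, Finset.sum_Ioc_consecutive _ (Nat.zero_le k) hkn]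
  have hsplitP : ∀ (f : ℕ → ℂ),
      ∏ i ∈ Finset.Icc 1 n, f i = (∏ i ∈ Finset.Icc 1 k, f i) * ∏ i ∈ Finset.Ioc k n, f i := by
    intro f
    rw [he n, he k, Finset.prod_Ioc_consecutive _ (Nat.zero_le k) hkn]
  rw [hsplit, hsplitP]
  have h1 : ∑ i ∈ Finset.Icc 1 k,
      (if i ≤ k then x i * x k * S else x i)⁻¹ = (x k)⁻¹ := by
    have : ∀ i ∈ Finset.Icc 1 k,
        (if i ≤ k then x i * x k * S else x i)⁻¹ = (x i)⁻¹ * ((x k)⁻¹ * S⁻¹) := by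
      intro i hi
      rw [if_pos (Finset.mem_Icc.mp hi).2]
      field_simp
    rw [Finset.sum_congr rfl this, ← Finset.sum_mul, ← hSdef]
    field_simp
  have h2 : ∀ i ∈ Finset.Ioc k n,
      (if i ≤ k then x i * x k * S else x i) = x i := by
    intro i hi
    have := Finset.mem_Ioc.mp hi
    rw [if_neg (by omega : ¬ i ≤ k)]
  have h2s : ∑ i ∈ Finset.Ioc k n,
      (if i ≤ k then x i * x k * S else x i)⁻¹ = ∑ i ∈ Finset.Ioc k n, (x i)⁻¹ :=
    Finset.sum_congr rfl (fun i hi => by rw [h2 i hi])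
  have h3 : ∏ i ∈ Finset.Icc 1 k, (if i ≤ k then x i * x k * S else x i)
      = (x k) ^ k * S ^ k * ∏ i ∈ Finset.Icc 1 k, x i := by
    rw [Finset.prod_congr rfl (fun i hi => if_pos (Finset.mem_Icc.mp hi).2),
      Finset.prod_mul_distrib, Finset.prod_mul_distrib, Finset.prod_const, Finset.prod_const,
      Nat.card_Icc, (by omega : k + 1 - 1 = k)]
    ring
  have h4 : ∑ i ∈ Finset.Icc k n, (x i)⁻¹ = (x k)⁻¹ + ∑ i ∈ Finset.Ioc k n, (x i)⁻¹ := by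
    rw [Finset.Icc_eq_cons_Ioc hkn, Finset.sum_cons]
  rw [h1, h2s, h3, Finset.prod_congr rfl h2, h4, hsplitP (fun i => x i)]
  ring
end

section
/- Let n≥1 and let S be a finite nonempty set of pairwise distinct vectors η=(η₁,…,η_n)∈ℤⁿ. Define f on the open set U={(x₁,…,x_n,z) : x_i∈ℂ* for all i, z∈ℂ*, x₁+z≠0} by f(x,z) = Σ_{η∈S} (x₁+z)^{η₁}·x₂^{η₂}⋯x_n^{η_n} (the image of the Laurent polynomial Σ_{η∈S} x^{η} under the wall-crossing substitution x₁ ↦ x₁(1+z/x₁)). Then there exists a Laurent polynomial P in the n+1 variables x₁,…,x_n,z with f=P on U if and only if η₁≥0 for every η∈S. -/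
/-- Evaluation of a Laurent polynomial in the `n+1` variables `x₁, …, x_n, z`
(encoded as a finitely supported coefficient function) at `(x, z)`. -/
noncomputable def lEvalN {n : ℕ} (P : ((Fin n → ℤ) × ℤ) →₀ ℂ) (x : Fin n → ℂ) (z : ℂ) : ℂ :=
  P.sum fun m c => c * (∏ i, x i ^ m.1 i) * z ^ m.2

lemma lEvalN_single {n : ℕ} (m : (Fin n → ℤ) × ℤ) (c : ℂ) (x : Fin n → ℂ) (z : ℂ) :
    lEvalN (Finsupp.single m c) x z = c * (∏ i, x i ^ m.1 i) * z ^ m.2 := by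
  classical
  exact Finsupp.sum_single_index (by simp)

lemma lEvalN_sum {n : ℕ} {α : Type*} (s : Finset α) (g : α → ((Fin n → ℤ) × ℤ) →₀ ℂ)
    (x : Fin n → ℂ) (z : ℂ) :
    lEvalN (∑ a ∈ s, g a) x z = ∑ a ∈ s, lEvalN (g a) x z := by
  classical
  exact (Finsupp.sum_finset_sum_index (by simp) (by intros; ring)).symm

lemma exists_pt {n : ℕ} (T : Finset (Fin n → ℤ)) (hT : T.Nonempty) :
    ∃ x : Fin n → ℂ, (∀ i, x i ≠ 0) ∧ (∑ η ∈ T, ∏ i, x i ^ η i) ≠ 0 := by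
  classical
  set b : Fin n → ℤ := fun i => T.inf' hT fun η => η i with hbdef
  have hb : ∀ η ∈ T, ∀ i, b i ≤ η i := fun η hη i => Finset.inf'_le _ hη
  set d : (Fin n → ℤ) → (Fin n →₀ ℕ) :=
    fun η => Finsupp.equivFunOnFinite.symm fun i => (η i - b i).toNat with hddef
  have hdapp : ∀ η i, d η i = (η i - b i).toNat := by
    intro η i; simp [hddef, Finsupp.equivFunOnFinite]
  have hdinj : ∀ η ∈ T, ∀ η' ∈ T, d η = d η' → η = η' := by
    intro η hη η' hη' h
    funext i
    have h0 : d η i = d η' i := by rw [h]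
    rw [hdapp, hdapp] at h0
    have h1 := hb η hη i
    have h2 := hb η' hη' i
    omega
  set q : MvPolynomial (Fin n) ℂ := ∑ η ∈ T, MvPolynomial.monomial (d η) (1:ℂ) with hqdef
  have hq0 : q ≠ 0 := by
    obtain ⟨η₀, hη₀⟩ := hT
    have hc : MvPolynomial.coeff (d η₀) q = 1 := by
      rw [hqdef, MvPolynomial.coeff_sum, Finset.sum_eq_single η₀]
      · simp [MvPolynomial.coeff_monomial]
      · intro η hη hne
        rw [MvPolynomial.coeff_monomial, if_neg]
        intro h; exact hne (hdinj η hη η₀ hη₀ h)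
      · intro h; exact absurd hη₀ h
    intro h; rw [h] at hc; simp at hc
  have hq' : q * ∏ i, MvPolynomial.X i ≠ 0 :=
    mul_ne_zero hq0 (Finset.prod_ne_zero_iff.2 fun i _ => (MvPolynomial.X_ne_zero i))
  have hex : ∃ x : Fin n → ℂ, MvPolynomial.eval x (q * ∏ i, MvPolynomial.X i) ≠ 0 := by
    by_contra hcon
    push_neg at hcon
    exact hq' (MvPolynomial.funext fun x => by simp [hcon x])
  obtain ⟨x, hx⟩ := hex
  rw [map_mul, map_prod] at hx
  simp only [MvPolynomial.eval_X] at hx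
  have hxne : ∀ i, x i ≠ 0 := by
    intro i hi
    exact hx (by rw [Finset.prod_eq_zero (Finset.mem_univ i) hi, mul_zero])
  have hqe : MvPolynomial.eval x q ≠ 0 := fun h => hx (by rw [h, zero_mul])
  have hqeval : MvPolynomial.eval x q = ∑ η ∈ T, ∏ i, x i ^ (η i - b i).toNat := by
    rw [hqdef, map_sum]
    refine Finset.sum_congr rfl fun η hη => ?_
    rw [MvPolynomial.eval_monomial, one_mul, Finsupp.prod_fintype _ _ (fun i => pow_zero _)]
    exact Finset.prod_congr rfl fun i _ => by rw [hdapp]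
  refine ⟨x, hxne, ?_⟩
  have key : ∑ η ∈ T, ∏ i, x i ^ η i
      = (∏ i, x i ^ b i) * ∑ η ∈ T, ∏ i, x i ^ (η i - b i).toNat := by
    rw [Finset.mul_sum]
    refine Finset.sum_congr rfl fun η hη => ?_
    rw [← Finset.prod_mul_distrib]
    refine Finset.prod_congr rfl fun i _ => ?_
    rw [← zpow_natCast (x i) ((η i - b i).toNat), Int.toNat_of_nonneg (sub_nonneg.2 (hb η hη i)),
      ← zpow_add₀ (hxne i)]
    congr 1; ring
  rw [key]
  rw [hqeval] at hqe
  exact mul_ne_zero (Finset.prod_ne_zero_iff.2 fun i _ => zpow_ne_zero _ (hxne i)) hqe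

/-- Non-mutability: the image `Σ_{η ∈ S} (x₁+z)^{η₁} x₂^{η₂} ⋯ x_n^{η_n}` of the Laurent
polynomial `Σ_{η ∈ S} x^η` under the wall-crossing substitution `x₁ ↦ x₁(1 + z/x₁)`
agrees with a Laurent polynomial in `x₁, …, x_n, z` on the set
`{xᵢ ≠ 0, z ≠ 0, x₁ + z ≠ 0}` if and only if `η₁ ≥ 0` for every `η ∈ S`. -/
theorem non_mutability (n : ℕ) (hn : 0 < n)
    (S : Finset (Fin n → ℤ)) (hS : S.Nonempty) :
    (∃ P : ((Fin n → ℤ) × ℤ) →₀ ℂ,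
      ∀ (x : Fin n → ℂ) (z : ℂ), (∀ i, x i ≠ 0) → z ≠ 0 → x ⟨0, hn⟩ + z ≠ 0 →
        (∑ η ∈ S, (x ⟨0, hn⟩ + z) ^ η ⟨0, hn⟩
            * ∏ i ∈ Finset.univ.erase ⟨0, hn⟩, x i ^ η i)
          = lEvalN P x z)
      ↔ ∀ η ∈ S, 0 ≤ η ⟨0, hn⟩ := by
  classical
  constructor
  · rintro ⟨P, hP⟩
    set i0 : Fin n := ⟨0, hn⟩ with hi0
    intro η₀ hη₀
    by_contra hneg
    push_neg at hneg
    set m : ℤ := S.inf' hS (fun η => η i0) with hm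
    have hmneg : m < 0 := lt_of_le_of_lt (Finset.inf'_le _ hη₀) hneg
    set T := S.filter (fun η => η i0 = m) with hTdef
    have hT : T.Nonempty := by
      obtain ⟨η₁, hη₁, he⟩ := Finset.exists_mem_eq_inf' hS (fun η => η i0)
      exact ⟨η₁, Finset.mem_filter.2 ⟨hη₁, he.symm⟩⟩
    set T' := T.image (fun η => Function.update η i0 0) with hT'def
    obtain ⟨x, hxne, hg⟩ := exists_pt T' (hT.image _)
    have hinj : ∀ a ∈ T, ∀ b ∈ T, Function.update a i0 0 = Function.update b i0 0 → a = b := by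
      intro a ha b hb hab
      have ha' := (Finset.mem_filter.1 ha).2
      have hb' := (Finset.mem_filter.1 hb).2
      funext i
      by_cases hi : i = i0
      · rw [hi, ha', hb']
      · have h := congrFun hab i
        simpa [Function.update, hi] using h
    have hgsum : ∑ μ ∈ T', ∏ i, x i ^ μ i
        = ∑ η ∈ T, ∏ i ∈ Finset.univ.erase i0, x i ^ η i := by
      rw [hT'def, Finset.sum_image hinj]
      refine Finset.sum_congr rfl fun η hη => ?_
      rw [← Finset.mul_prod_erase Finset.univ _ (Finset.mem_univ i0)]
      rw [Function.update_self, zpow_zero, one_mul]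
      exact Finset.prod_congr rfl fun i hi => by
        rw [Function.update_of_ne (Finset.ne_of_mem_erase hi)]
    rw [hgsum] at hg
    -- polynomial setup
    set N : ℕ := (-m).toNat with hNdef
    have hNpos : 0 < N :=
      Nat.pos_of_ne_zero fun h => absurd (Int.toNat_eq_zero.1 h) (not_le.2 (neg_pos.2 hmneg))
    have hNcast : (N : ℤ) = -m := Int.toNat_of_nonneg (by linarith)
    set M : ℕ := P.support.sup (fun p => (-p.2).toNat) with hMdef
    have hM : ∀ p ∈ P.support, (0:ℤ) ≤ p.2 + M := by
      intro p hp
      have h1 : -p.2 ≤ ((-p.2).toNat : ℤ) := Int.self_le_toNat _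
      have h2 : (((-p.2).toNat : ℕ) : ℤ) ≤ (M : ℤ) :=
        Int.ofNat_le.2 (Finset.le_sup (f := fun p => (-p.2).toNat) hp)
      linarith
    set L : Polynomial ℂ := ∑ η ∈ S,
      Polynomial.C (∏ i ∈ Finset.univ.erase i0, x i ^ η i)
        * (Polynomial.X + Polynomial.C (x i0)) ^ (η i0 - m).toNat * Polynomial.X ^ M
      with hLdef
    set R : Polynomial ℂ := (Polynomial.X + Polynomial.C (x i0)) ^ N
        * ∑ p ∈ P.support, Polynomial.C (P p * ∏ i, x i ^ p.1 i)
            * Polynomial.X ^ (p.2 + (M:ℤ)).toNat with hRdef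
    have heq : ∀ z : ℂ, z ≠ 0 → z ≠ -x i0 → Polynomial.eval z L = Polynomial.eval z R := by
      intro z hz hzx
      have hw : x i0 + z ≠ 0 := by
        intro h; apply hzx; linear_combination h
      have key := hP x z hxne hz hw
      have hL : Polynomial.eval z L
          = (∑ η ∈ S, (x i0 + z) ^ η i0 * ∏ i ∈ Finset.univ.erase i0, x i ^ η i)
            * ((x i0 + z) ^ (-m) * z ^ (M:ℤ)) := by
        rw [hLdef, Polynomial.eval_finset_sum, Finset.sum_mul]
        refine Finset.sum_congr rfl fun η hη => ?_
        have hηm : m ≤ η i0 := Finset.inf'_le _ hη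
        simp only [Polynomial.eval_mul, Polynomial.eval_pow, Polynomial.eval_add,
          Polynomial.eval_X, Polynomial.eval_C]
        rw [← zpow_natCast (z + x i0) ((η i0 - m).toNat),
          Int.toNat_of_nonneg (sub_nonneg.2 hηm), ← zpow_natCast z M,
          add_comm z (x i0), sub_eq_add_neg, zpow_add₀ hw]
        ring
      have hR : Polynomial.eval z R
          = lEvalN P x z * ((x i0 + z) ^ (-m) * z ^ (M:ℤ)) := by
        rw [hRdef, Polynomial.eval_mul, Polynomial.eval_finset_sum]
        have h1 : Polynomial.eval z ((Polynomial.X + Polynomial.C (x i0)) ^ N)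
            = (x i0 + z) ^ (-m) := by
          simp only [Polynomial.eval_pow, Polynomial.eval_add, Polynomial.eval_X,
            Polynomial.eval_C]
          rw [← zpow_natCast (z + x i0) N, hNcast, add_comm z (x i0)]
        rw [h1]
        have h2 : ∑ p ∈ P.support,
            Polynomial.eval z (Polynomial.C (P p * ∏ i, x i ^ p.1 i)
              * Polynomial.X ^ (p.2 + (M:ℤ)).toNat)
            = lEvalN P x z * z ^ (M:ℤ) := by
          rw [lEvalN, Finsupp.sum, Finset.sum_mul]
          refine Finset.sum_congr rfl fun p hp => ?_
          simp only [Polynomial.eval_mul, Polynomial.eval_pow, Polynomial.eval_X,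
            Polynomial.eval_C]
          rw [← zpow_natCast z ((p.2 + (M:ℤ)).toNat), Int.toNat_of_nonneg (hM p hp),
            zpow_add₀ hz]
          ring
        rw [h2]
        ring
      rw [hL, hR, key]
    have hLR : L = R := by
      apply Polynomial.eq_of_infinite_eval_eq
      have hfin : (({0, -x i0} : Set ℂ)ᶜ).Infinite :=
        Set.Finite.infinite_compl (by simp)
      refine hfin.mono ?_
      intro z hz
      simp only [Set.mem_compl_iff, Set.mem_insert_iff, Set.mem_singleton_iff, not_or] at hz
      exact heq z hz.1 hz.2
    have hRz : Polynomial.eval (-x i0) R = 0 := by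
      rw [hRdef]
      simp [zero_pow hNpos.ne']
    have hLz : Polynomial.eval (-x i0) L
        = (∑ η ∈ T, ∏ i ∈ Finset.univ.erase i0, x i ^ η i) * (-x i0) ^ M := by
      rw [hLdef, Polynomial.eval_finset_sum]
      have hterm : ∀ η ∈ S,
          Polynomial.eval (-x i0) (Polynomial.C (∏ i ∈ Finset.univ.erase i0, x i ^ η i)
            * (Polynomial.X + Polynomial.C (x i0)) ^ (η i0 - m).toNat * Polynomial.X ^ M)
          = if η i0 = m then (∏ i ∈ Finset.univ.erase i0, x i ^ η i) * (-x i0) ^ M else 0 := by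
        intro η hη
        have hηm : m ≤ η i0 := Finset.inf'_le _ hη
        simp only [Polynomial.eval_mul, Polynomial.eval_pow, Polynomial.eval_add,
          Polynomial.eval_X, Polynomial.eval_C, neg_add_cancel]
        by_cases hcase : η i0 = m
        · rw [if_pos hcase, hcase]
          simp
        · have hpos : 0 < η i0 - m := sub_pos.2 (lt_of_le_of_ne hηm (Ne.symm hcase))
          rw [if_neg hcase, zero_pow (fun h => absurd (Int.toNat_eq_zero.1 h) (not_le.2 hpos)),
            mul_zero, zero_mul]
      rw [Finset.sum_congr rfl hterm, Finset.sum_ite, Finset.sum_const_zero, add_zero,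
        ← Finset.sum_mul]
    rw [hLR, hRz] at hLz
    have : (∑ η ∈ T, ∏ i ∈ Finset.univ.erase i0, x i ^ η i) * (-x i0) ^ M ≠ 0 :=
      mul_ne_zero hg (pow_ne_zero _ (neg_ne_zero.2 (hxne i0)))
    exact this hLz.symm
  · intro hpos
    set i0 : Fin n := ⟨0, hn⟩ with hi0
    refine ⟨∑ η ∈ S, ∑ j ∈ Finset.range ((η i0).toNat + 1),
      Finsupp.single ((fun i => if i = i0 then (j:ℤ) else η i), (((η i0).toNat - j : ℕ) : ℤ))
        (((η i0).toNat.choose j : ℂ)), ?_⟩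
    intro x z hx hz hxz
    rw [lEvalN_sum]
    refine Finset.sum_congr rfl fun η hη => ?_
    rw [lEvalN_sum]
    have hN : ((η i0).toNat : ℤ) = η i0 := Int.toNat_of_nonneg (hpos η hη)
    rw [← hN, zpow_natCast, add_pow, Finset.sum_mul]
    refine Finset.sum_congr rfl fun j hj => ?_
    rw [lEvalN_single, zpow_natCast,
      ← Finset.mul_prod_erase Finset.univ _ (Finset.mem_univ i0)]
    have h1 : x i0 ^ (if i0 = i0 then (j:ℤ) else η i0) = x i0 ^ j := by
      rw [if_pos rfl, zpow_natCast]
    have h2 : ∏ i ∈ Finset.univ.erase i0, x i ^ (if i = i0 then (j:ℤ) else η i)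
        = ∏ i ∈ Finset.univ.erase i0, x i ^ η i :=
      Finset.prod_congr rfl fun i hi => by rw [if_neg (Finset.ne_of_mem_erase hi)]
    rw [h1, h2]
    simp only [Int.toNat_natCast]
    ring
end
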